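/- arXiv:2309.00591 — 2 statements merged into one kernel-verified Lean document; each statement's English description precedes it below -/
import Mathlib

section
/- Confidence level of EOCP (Corollary 1): For the EOCP algorithm run with exploration function l = log T + 4√(2 log T) on a Gaussian bandit instance, there exists a constant C > 0 (depending only on the instance) such that for all T ≥ max{16, A, 16·l·Δ_lb^{-2}}, the probability of committing to a suboptimal arm satisfies P(â ≠ a*) ≤ C/T. -/
open MeasureTheory ProbabilityTheory Real Filter

attribute [local instance] Classical.propDecidable

noncomputable section

/-- The least-index element of `Fin A` maximizing `f`. -/
def argmaxFin {A : ℕ} (hA : 0 < A) (f : Fin A → ℝ) : Fin A :=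
  (Finset.univ.filter fun a => ∀ b, f b ≤ f a).min' (by
    obtain ⟨a, -, ha⟩ := Finset.exists_max_image (Finset.univ : Finset (Fin A)) f
      ⟨⟨0, hA⟩, Finset.mem_univ _⟩
    exact ⟨a, Finset.mem_filter.mpr ⟨Finset.mem_univ _, fun b => ha b (Finset.mem_univ _)⟩⟩)

/-- Empirical mean of the first `n` rewards of arm `a`, where `W a i` is the reward
received at the `i`-th pull of arm `a`. -/
def empMean {Ω : Type*} {A : ℕ} (W : Fin A → ℕ → Ω → ℝ) (ω : Ω) (n : ℕ) (a : Fin A) : ℝ :=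
  (∑ i ∈ Finset.range n, W a (i + 1) ω) / n

/-- The arm chosen by EOCP at the (0-indexed) round `t` (i.e. the 1-indexed round `t + 1`),
given the history `h` of the arms pulled in the first `t` rounds: pull each arm once in the
first `A` rounds, then UCB exploration up to the pre-determined stopping time `Tc`, and
LCB commitment (based on the data available at time `⌊Tc⌋`) afterwards. -/
def eocpStep {Ω : Type*} {A : ℕ} (hA : 0 < A) (W : Fin A → ℕ → Ω → ℝ) (l Tc : ℝ)
    (ω : Ω) (t : ℕ) (h : List (Fin A)) : Fin A :=
  if ht : t < A then ⟨t, ht⟩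
  else if ((t : ℝ) + 1) ≤ Tc then
    argmaxFin hA fun a => empMean W ω (h.count a) a + Real.sqrt (2 * l / (h.count a))
  else
    argmaxFin hA fun a =>
      empMean W ω ((h.take ⌊Tc⌋₊).count a) a - Real.sqrt (2 * l / ((h.take ⌊Tc⌋₊).count a))

/-- History (list of pulled arms, in order) of the EOCP algorithm after `t` rounds. -/
def eocpHist {Ω : Type*} {A : ℕ} (hA : 0 < A) (W : Fin A → ℕ → Ω → ℝ) (l Tc : ℝ)
    (ω : Ω) : ℕ → List (Fin A)
  | 0 => []
  | t + 1 => eocpHist hA W l Tc ω t ++ [eocpStep hA W l Tc ω t (eocpHist hA W l Tc ω t)]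

/-- `N_t(a)`: number of pulls of arm `a` by EOCP in the first `t` rounds. -/
def eocpN {Ω : Type*} {A : ℕ} (hA : 0 < A) (W : Fin A → ℕ → Ω → ℝ) (l Tc : ℝ)
    (ω : Ω) (t : ℕ) (a : Fin A) : ℕ :=
  (eocpHist hA W l Tc ω t).count a


/-- The arm EOCP commits to: the arm with the largest lower confidence bound at the end of
the exploration phase. -/
def eocpCommit {Ω : Type*} {A : ℕ} (hA : 0 < A) (W : Fin A → ℕ → Ω → ℝ) (l Tc : ℝ)
    (ω : Ω) : Fin A :=
  argmaxFin hA fun a =>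
    empMean W ω (eocpN hA W l Tc ω ⌊Tc⌋₊ a) a -
      Real.sqrt (2 * l / (eocpN hA W l Tc ω ⌊Tc⌋₊ a))

lemma argmaxFin_le {A : ℕ} (hA : 0 < A) (f : Fin A → ℝ) (b : Fin A) :
    f b ≤ f (argmaxFin hA f) := by
  have := Finset.min'_mem (Finset.univ.filter fun a => ∀ b, f b ≤ f a) (by
    obtain ⟨a, -, ha⟩ := Finset.exists_max_image (Finset.univ : Finset (Fin A)) f
      ⟨⟨0, hA⟩, Finset.mem_univ _⟩
    exact ⟨a, Finset.mem_filter.mpr ⟨Finset.mem_univ _, fun b => ha b (Finset.mem_univ _)⟩⟩)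
  rw [Finset.mem_filter] at this
  exact this.2 b

lemma argmaxFin_eq {A : ℕ} (hA : 0 < A) (f : Fin A → ℝ) (a0 : Fin A)
    (h : ∀ b, b ≠ a0 → f b < f a0) : argmaxFin hA f = a0 := by
  by_contra hne
  exact absurd (argmaxFin_le hA f a0) (not_le.mpr (h _ hne))

section Alg
variable {Ω : Type*} {A : ℕ} (hA : 0 < A) (W : Fin A → ℕ → Ω → ℝ) (l Tc : ℝ) (ω : Ω)

lemma eocpHist_length (t : ℕ) : (eocpHist hA W l Tc ω t).length = t := by
  induction t with
  | zero => rfl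
  | succ t ih => simp [eocpHist, ih]

lemma eocpN_le (t : ℕ) (a : Fin A) : eocpN hA W l Tc ω t a ≤ t := by
  have := List.count_le_length (a := a) (l := eocpHist hA W l Tc ω t)
  rwa [eocpHist_length hA W l Tc ω t] at this

lemma eocpN_succ (t : ℕ) (a : Fin A) :
    eocpN hA W l Tc ω (t + 1) a =
      eocpN hA W l Tc ω t a +
        if eocpStep hA W l Tc ω t (eocpHist hA W l Tc ω t) = a then 1 else 0 := by
  by_cases h : eocpStep hA W l Tc ω t (eocpHist hA W l Tc ω t) = a <;>
    simp [eocpN, eocpHist, List.count_append, List.count_singleton', h]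

lemma eocpN_mono (a : Fin A) {s t : ℕ} (h : s ≤ t) :
    eocpN hA W l Tc ω s a ≤ eocpN hA W l Tc ω t a := by
  induction t with
  | zero => have : s = 0 := by omega
            subst this; exact le_refl _
  | succ t ih =>
    rcases Nat.lt_or_ge s (t+1) with h' | h'
    · exact le_trans (ih (by omega)) (by rw [eocpN_succ]; omega)
    · have : s = t + 1 := by omega
      subst this; exact le_refl _

lemma eocpN_init (t : ℕ) (ht : t ≤ A) (a : Fin A) :
    eocpN hA W l Tc ω t a = if (a : ℕ) < t then 1 else 0 := by
  induction t with
  | zero => simp [eocpN, eocpHist]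
  | succ t ih =>
    have hstep : eocpStep hA W l Tc ω t (eocpHist hA W l Tc ω t) = ⟨t, by omega⟩ := by
      rw [eocpStep, dif_pos (by omega : t < A)]
    rw [eocpN_succ, hstep, ih (by omega)]
    simp only [Fin.ext_iff]
    split_ifs <;> omega

lemma eocpN_sum (t : ℕ) : ∑ a : Fin A, eocpN hA W l Tc ω t a = t := by
  induction t with
  | zero => simp [eocpN, eocpHist]
  | succ t ih =>
    simp only [eocpN_succ, Finset.sum_add_distrib, ih, Finset.sum_ite_eq, Finset.mem_univ]
    simp

end Alg

lemma commit_good {Ω : Type*} {A : ℕ} (hA : 0 < A) (hA2 : 2 ≤ A) (μ : Fin A → ℝ)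
    (astar : Fin A) (hopt : ∀ a, a ≠ astar → μ a < μ astar)
    (Δlb : ℝ) (hΔlb : 0 < Δlb) (hΔlb' : ∀ a, a ≠ astar → Δlb ≤ μ astar - μ a)
    (l : ℝ) (hl : 0 < l) (W : Fin A → ℕ → Ω → ℝ) (ω : Ω)
    (Tc : ℝ) (hTc : Tc = 8 * A * l / Δlb ^ 2 + A)
    (good : ∀ a : Fin A, ∀ m : ℕ, 1 ≤ m → m ≤ ⌊Tc⌋₊ →
      |empMean W ω m a - μ a| < Real.sqrt (2 * l / m)) :
    eocpCommit hA W l Tc ω = astar := by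
  set n := ⌊Tc⌋₊ with hn
  have hTcA : (A : ℝ) ≤ Tc := by
    rw [hTc]
    have : 0 ≤ 8 * A * l / Δlb ^ 2 := by positivity
    linarith
  have hTc0 : 0 ≤ Tc := le_trans (by positivity) hTcA
  have hnA : A ≤ n := Nat.le_floor hTcA
  have hnTc : (n : ℝ) ≤ Tc := Nat.floor_le hTc0
  -- every arm has been pulled at least once after round A
  have hone : ∀ t, A ≤ t → ∀ a : Fin A, 1 ≤ eocpN hA W l Tc ω t a := by
    intro t ht a
    have h1 : eocpN hA W l Tc ω A a = 1 := by
      rw [eocpN_init hA W l Tc ω A le_rfl a, if_pos a.isLt]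
    calc 1 = eocpN hA W l Tc ω A a := h1.symm
    _ ≤ eocpN hA W l Tc ω t a := eocpN_mono hA W l Tc ω a ht
  -- the key invariant during the UCB phase
  have key : ∀ t, A ≤ t → t ≤ n → ∀ a, a ≠ astar →
      ((eocpN hA W l Tc ω t a : ℝ)) < 8 * l / (μ astar - μ a) ^ 2 + 1 := by
    intro t ht
    induction t, ht using Nat.le_induction with
    | base =>
      intro _ a ha
      have hΔ : 0 < μ astar - μ a := sub_pos.mpr (hopt a ha)
      rw [eocpN_init hA W l Tc ω A le_rfl a, if_pos a.isLt]
      have : 0 < 8 * l / (μ astar - μ a) ^ 2 := by positivity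
      push_cast
      linarith
    | succ t hAt ih =>
      intro ht1 a ha
      have htn : t ≤ n := by omega
      have hΔ : 0 < μ astar - μ a := sub_pos.mpr (hopt a ha)
      rw [eocpN_succ]
      by_cases hstep : eocpStep hA W l Tc ω t (eocpHist hA W l Tc ω t) = a
      · rw [if_pos hstep]
        -- a was pulled at round t+1 by UCB; show its count before was < 8l/Δ²
        have htTc : ((t : ℝ) + 1) ≤ Tc := by
          calc ((t : ℝ) + 1) = ((t + 1 : ℕ) : ℝ) := by push_cast; ring
          _ ≤ (n : ℝ) := by exact_mod_cast ht1
          _ ≤ Tc := hnTc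
        rw [eocpStep, dif_neg (by omega : ¬ t < A), if_pos htTc] at hstep
        set Na := eocpN hA W l Tc ω t a with hNa
        set Ns := eocpN hA W l Tc ω t astar with hNs
        have hNa1 : 1 ≤ Na := hone t hAt a
        have hNs1 : 1 ≤ Ns := hone t hAt astar
        have hNan : Na ≤ n := le_trans (eocpN_le hA W l Tc ω t a) htn
        have hNsn : Ns ≤ n := le_trans (eocpN_le hA W l Tc ω t astar) htn
        have hga := good a Na hNa1 hNan
        have hgs := good astar Ns hNs1 hNsn
        rw [abs_lt] at hga hgs
        have hle := argmaxFin_le hA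
          (fun b => empMean W ω ((eocpHist hA W l Tc ω t).count b) b +
            Real.sqrt (2 * l / ((eocpHist hA W l Tc ω t).count b))) astar
        rw [hstep] at hle
        simp only [show ∀ b : Fin A, (eocpHist hA W l Tc ω t).count b = eocpN hA W l Tc ω t b
          from fun _ => rfl] at hle
        rw [← hNa, ← hNs] at hle
        -- μ astar < μ a + 2 √(2l/Na)
        have hkey : μ astar - μ a < 2 * Real.sqrt (2 * l / Na) := by
          have h1 : μ astar - Real.sqrt (2 * l / Ns) < empMean W ω Ns astar := by linarith [hgs.1]
          have h2 : empMean W ω Na a < μ a + Real.sqrt (2 * l / Na) := by linarith [hga.2]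
          linarith
        have hΔ2 : (μ astar - μ a) / 2 < Real.sqrt (2 * l / Na) := by linarith
        have hsq : ((μ astar - μ a) / 2) ^ 2 < 2 * l / Na :=
          (Real.lt_sqrt (by positivity)).mp hΔ2
        have hNa0 : (0 : ℝ) < Na := by exact_mod_cast hNa1
        have hfin : (Na : ℝ) < 8 * l / (μ astar - μ a) ^ 2 := by
          rw [lt_div_iff₀ (by positivity)]
          rw [div_pow, div_lt_div_iff₀ (by norm_num) hNa0] at hsq
          nlinarith [hsq]
        push_cast
        linarith
      · rw [if_neg hstep, add_zero]
        exact ih htn a ha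
  -- counts of suboptimal arms at the end of exploration
  have hsub : ∀ a, a ≠ astar → ((eocpN hA W l Tc ω n a : ℝ)) < 8 * l / Δlb ^ 2 + 1 := by
    intro a ha
    have hΔ : 0 < μ astar - μ a := sub_pos.mpr (hopt a ha)
    refine lt_of_lt_of_le (key n hnA le_rfl a ha) ?_
    have : 8 * l / (μ astar - μ a) ^ 2 ≤ 8 * l / Δlb ^ 2 := by
      apply div_le_div_of_nonneg_left (by positivity) (by positivity)
      exact pow_le_pow_left₀ hΔlb.le (hΔlb' a ha) 2
    linarith
  -- lower bound on the count of the optimal arm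
  set Ns := eocpN hA W l Tc ω n astar with hNsdef
  have hNslb : 8 * l / Δlb ^ 2 < (Ns : ℝ) := by
    have hsum := eocpN_sum hA W l Tc ω n
    have hsplit : Ns + ∑ a ∈ Finset.univ.erase astar, eocpN hA W l Tc ω n a = n :=
      (Finset.add_sum_erase _ _ (Finset.mem_univ astar)).trans hsum
    have hsum' : (∑ a ∈ Finset.univ.erase astar, (eocpN hA W l Tc ω n a : ℝ))
        < (A - 1) * (8 * l / Δlb ^ 2 + 1) := by
      have hcard : (Finset.univ.erase astar).card = A - 1 := by
        rw [Finset.card_erase_of_mem (Finset.mem_univ astar), Finset.card_univ, Fintype.card_fin]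
      have hne : (Finset.univ.erase astar).Nonempty := by
        rw [← Finset.card_pos, hcard]; omega
      calc (∑ a ∈ Finset.univ.erase astar, (eocpN hA W l Tc ω n a : ℝ))
          < ∑ _a ∈ Finset.univ.erase astar, (8 * l / Δlb ^ 2 + 1) := by
            apply Finset.sum_lt_sum_of_nonempty hne
            intro a ha
            exact hsub a (Finset.ne_of_mem_erase ha)
      _ = (A - 1) * (8 * l / Δlb ^ 2 + 1) := by
            rw [Finset.sum_const, hcard, nsmul_eq_mul]
            congr 1
            have : (1:ℕ) ≤ A := by omega
            push_cast [Nat.cast_sub this]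
            ring
    have hfloor : Tc - 1 < (n : ℝ) := Nat.sub_one_lt_floor Tc
    have hNs' : (Ns : ℝ) = (n : ℝ) - ∑ a ∈ Finset.univ.erase astar, (eocpN hA W l Tc ω n a : ℝ) := by
      have := congrArg (fun k : ℕ => (k : ℝ)) hsplit
      push_cast at this
      linarith
    have hA1 : (1:ℝ) ≤ (A:ℝ) := by exact_mod_cast (by omega : 1 ≤ A)
    rw [hTc] at hfloor
    have hAx : 8 * (A:ℝ) * l / Δlb ^ 2 = (A:ℝ) * (8 * l / Δlb ^ 2) := by ring
    rw [hAx] at hfloor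
    rw [hNs']
    nlinarith [hsum', hfloor]
  -- conclude
  rw [eocpCommit]
  apply argmaxFin_eq
  intro a ha
  have hΔ : 0 < μ astar - μ a := sub_pos.mpr (hopt a ha)
  set Na := eocpN hA W l Tc ω n a with hNadef
  have hNa1 : 1 ≤ Na := hone n hnA a
  have hNs1 : 1 ≤ Ns := hone n hnA astar
  have hga := good a Na hNa1 (eocpN_le hA W l Tc ω n a)
  have hgs := good astar Ns hNs1 (eocpN_le hA W l Tc ω n astar)
  rw [abs_lt] at hga hgs
  have hNsa : 8 * l / (μ astar - μ a) ^ 2 < (Ns : ℝ) := by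
    refine lt_of_le_of_lt ?_ hNslb
    apply div_le_div_of_nonneg_left (by positivity) (by positivity)
    exact pow_le_pow_left₀ hΔlb.le (hΔlb' a ha) 2
  have hNs0 : (0 : ℝ) < Ns := by exact_mod_cast hNs1
  have hsqrt : Real.sqrt (2 * l / Ns) < (μ astar - μ a) / 2 := by
    rw [Real.sqrt_lt' (by positivity)]
    rw [div_lt_iff₀ hNs0]
    rw [div_lt_iff₀ (by positivity : (0:ℝ) < (μ astar - μ a) ^ 2)] at hNsa
    nlinarith [hNsa]
  -- LCB comparison
  have h1 : empMean W ω Na a - Real.sqrt (2 * l / Na) < μ a := by linarith [hga.2]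
  have h2 : μ astar - 2 * Real.sqrt (2 * l / Ns)
      < empMean W ω Ns astar - Real.sqrt (2 * l / Ns) := by linarith [hgs.1]
  calc empMean W ω Na a - Real.sqrt (2 * l / Na) < μ a := h1
  _ < μ astar - 2 * Real.sqrt (2 * l / Ns) := by linarith
  _ < empMean W ω Ns astar - Real.sqrt (2 * l / Ns) := h2

open scoped ENNReal NNReal

lemma gauss_pdf_mul_exp (m t x : ℝ) :
    gaussianPDFReal m 1 x * rexp (t * x)
      = rexp (t * m + t ^ 2 / 2) * gaussianPDFReal (m + t) 1 x := by
  have aux : ∀ c a b d e : ℝ, a + b = d + e → c * rexp a * rexp b = rexp d * (c * rexp e) := by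
    intro c a b d e h
    rw [mul_assoc, ← Real.exp_add, h, Real.exp_add]
    ring
  simp only [gaussianPDFReal, NNReal.coe_one, mul_one]
  exact aux _ _ _ _ _ (by ring)

lemma integral_exp_gaussianReal (m t : ℝ) :
    ∫ x, rexp (t * x) ∂(gaussianReal m 1) = rexp (t * m + t ^ 2 / 2) := by
  rw [gaussianReal_of_var_ne_zero m one_ne_zero]
  have hmeas : Measurable fun x => (gaussianPDFReal m 1 x).toNNReal :=
    (measurable_gaussianPDFReal m 1).real_toNNReal
  have hpdf : (gaussianPDF m 1) = fun x => ((gaussianPDFReal m 1 x).toNNReal : ℝ≥0∞) := rfl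
  rw [hpdf, integral_withDensity_eq_integral_smul hmeas]
  have : (fun x => (gaussianPDFReal m 1 x).toNNReal • rexp (t * x))
      = fun x => rexp (t * m + t ^ 2 / 2) * gaussianPDFReal (m + t) 1 x := by
    funext x
    rw [NNReal.smul_def, smul_eq_mul, Real.coe_toNNReal _ (gaussianPDFReal_nonneg m 1 x)]
    exact gauss_pdf_mul_exp m t x
  rw [this, integral_const_mul, integral_gaussianPDFReal_eq_one (m + t) one_ne_zero, mul_one]

lemma integrable_exp_gaussianReal (m t : ℝ) :
    Integrable (fun x => rexp (t * x)) (gaussianReal m 1) := by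
  rw [gaussianReal_of_var_ne_zero m one_ne_zero]
  rw [integrable_withDensity_iff (measurable_gaussianPDF m 1)
    (Eventually.of_forall fun x => ENNReal.ofReal_lt_top)]
  have : (fun x => rexp (t * x) * (gaussianPDF m 1 x).toReal)
      = fun x => rexp (t * m + t ^ 2 / 2) * gaussianPDFReal (m + t) 1 x := by
    funext x
    rw [gaussianPDF, ENNReal.toReal_ofReal (gaussianPDFReal_nonneg m 1 x), mul_comm]
    exact gauss_pdf_mul_exp m t x
  rw [this]
  exact (integrable_gaussianPDFReal (m + t) 1).const_mul _

section Prob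
variable {Ω : Type*} [MeasurableSpace Ω] {P : Measure Ω} [IsProbabilityMeasure P]
  {A : ℕ} {μ : Fin A → ℝ} {W : Fin A → ℕ → Ω → ℝ}

lemma mgf_W (hW : ∀ a i, Measurable (W a i))
    (hmap : ∀ a i, Measure.map (W a i) P = gaussianReal (μ a) 1)
    (a : Fin A) (i : ℕ) (t : ℝ) : mgf (W a i) P t = rexp (t * μ a + t ^ 2 / 2) := by
  calc mgf (W a i) P t = ∫ ω, rexp (t * W a i ω) ∂P := rfl
  _ = ∫ y, rexp (t * y) ∂(P.map (W a i)) :=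
      (integral_map (hW a i).aemeasurable
        ((measurable_exp.comp (measurable_const.mul measurable_id)).aestronglyMeasurable)).symm
  _ = rexp (t * μ a + t ^ 2 / 2) := by
      rw [hmap a i]; exact integral_exp_gaussianReal (μ a) t

lemma integrable_exp_W (hW : ∀ a i, Measurable (W a i))
    (hmap : ∀ a i, Measure.map (W a i) P = gaussianReal (μ a) 1)
    (a : Fin A) (i : ℕ) (t : ℝ) : Integrable (fun ω => rexp (t * W a i ω)) P := by
  have h : Integrable (fun y => rexp (t * y)) (P.map (W a i)) := by
    rw [hmap a i]; exact integrable_exp_gaussianReal (μ a) t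
  exact (integrable_map_measure
    ((measurable_exp.comp (measurable_const.mul measurable_id)).aestronglyMeasurable)
    (hW a i).aemeasurable).mp h

lemma sum_image_eq (W : Fin A → ℕ → Ω → ℝ) (a : Fin A) (n : ℕ) :
    (∑ p ∈ (Finset.range n).image (fun i => (a, i + 1)), fun ω => W p.1 p.2 ω)
      = fun ω => ∑ i ∈ Finset.range n, W a (i + 1) ω := by
  funext ω
  rw [Finset.sum_apply]
  rw [Finset.sum_image (by intro x _ y _ h; simpa using h)]

lemma mgf_S (hW : ∀ a i, Measurable (W a i))
    (hmap : ∀ a i, Measure.map (W a i) P = gaussianReal (μ a) 1)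
    (hind : iIndepFun (fun p : Fin A × ℕ => W p.1 p.2) P)
    (a : Fin A) (n : ℕ) (t : ℝ) :
    mgf (fun ω => ∑ i ∈ Finset.range n, W a (i + 1) ω) P t
      = rexp ((n : ℝ) * (t * μ a + t ^ 2 / 2)) := by
  rw [← sum_image_eq W a n]
  have h := hind.mgf_sum (fun p => hW p.1 p.2) ((Finset.range n).image (fun i => (a, i + 1)))
      (t := t)
  calc mgf (∑ p ∈ (Finset.range n).image (fun i => (a, i + 1)), fun ω => W p.1 p.2 ω) P t
      = ∏ p ∈ (Finset.range n).image (fun i => (a, i + 1)), mgf (W p.1 p.2) P t := h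
  _ = ∏ i ∈ Finset.range n, mgf (W a (i + 1)) P t :=
      Finset.prod_image (by intro x _ y _ h; simpa using h)
  _ = rexp ((n : ℝ) * (t * μ a + t ^ 2 / 2)) := by
      simp_rw [mgf_W hW hmap a _ t, Finset.prod_const, Finset.card_range,
        ← Real.exp_nat_mul]

lemma integrable_exp_S (hW : ∀ a i, Measurable (W a i))
    (hmap : ∀ a i, Measure.map (W a i) P = gaussianReal (μ a) 1)
    (hind : iIndepFun (fun p : Fin A × ℕ => W p.1 p.2) P)
    (a : Fin A) (n : ℕ) (t : ℝ) :
    Integrable (fun ω => rexp (t * ∑ i ∈ Finset.range n, W a (i + 1) ω)) P := by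
  have h := hind.integrable_exp_mul_sum (fun p => hW p.1 p.2)
    (s := (Finset.range n).image (fun i => (a, i + 1)))
    (fun p _ => integrable_exp_W hW hmap p.1 p.2 t)
  rw [sum_image_eq W a n] at h
  exact h

end Prob

section Chernoff
variable {Ω : Type*} [MeasurableSpace Ω] {P : Measure Ω} [IsProbabilityMeasure P]
  {A : ℕ} {μ : Fin A → ℝ} {W : Fin A → ℕ → Ω → ℝ}

lemma chernoff_up (hW : ∀ a i, Measurable (W a i))
    (hmap : ∀ a i, Measure.map (W a i) P = gaussianReal (μ a) 1)
    (hind : iIndepFun (fun p : Fin A × ℕ => W p.1 p.2) P)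
    (a : Fin A) (n : ℕ) (hn : 1 ≤ n) {l : ℝ} (hl : 0 < l) :
    P {ω | (n : ℝ) * μ a + (n : ℝ) * Real.sqrt (2 * l / n) ≤ ∑ i ∈ Finset.range n, W a (i + 1) ω}
      ≤ ENNReal.ofReal (rexp (-l)) := by
  set ε := Real.sqrt (2 * l / n) with hε
  have hn0 : (0 : ℝ) < n := by exact_mod_cast hn
  have hε0 : 0 ≤ ε := Real.sqrt_nonneg _
  have hε2 : (n : ℝ) * ε ^ 2 = 2 * l := by
    rw [hε, Real.sq_sqrt (by positivity), mul_div_cancel₀ _ (ne_of_gt hn0)]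
  have h := measure_ge_le_exp_mul_mgf (X := fun ω => ∑ i ∈ Finset.range n, W a (i + 1) ω)
    (μ := P) (t := ε) ((n : ℝ) * μ a + (n : ℝ) * ε) hε0 (integrable_exp_S hW hmap hind a n ε)
  rw [mgf_S hW hmap hind a n ε] at h
  have hexp : rexp (-ε * ((n : ℝ) * μ a + (n : ℝ) * ε)) * rexp ((n : ℝ) * (ε * μ a + ε ^ 2 / 2))
      = rexp (-l) := by
    rw [← Real.exp_add]
    congr 1
    linear_combination (-(1 : ℝ) / 2) * hε2
  rw [hexp] at h
  exact (ENNReal.le_ofReal_iff_toReal_le (measure_ne_top P _) (Real.exp_nonneg _)).mpr h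

lemma chernoff_low (hW : ∀ a i, Measurable (W a i))
    (hmap : ∀ a i, Measure.map (W a i) P = gaussianReal (μ a) 1)
    (hind : iIndepFun (fun p : Fin A × ℕ => W p.1 p.2) P)
    (a : Fin A) (n : ℕ) (hn : 1 ≤ n) {l : ℝ} (hl : 0 < l) :
    P {ω | ∑ i ∈ Finset.range n, W a (i + 1) ω ≤ (n : ℝ) * μ a - (n : ℝ) * Real.sqrt (2 * l / n)}
      ≤ ENNReal.ofReal (rexp (-l)) := by
  set ε := Real.sqrt (2 * l / n) with hε
  have hn0 : (0 : ℝ) < n := by exact_mod_cast hn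
  have hε0 : 0 ≤ ε := Real.sqrt_nonneg _
  have hε2 : (n : ℝ) * ε ^ 2 = 2 * l := by
    rw [hε, Real.sq_sqrt (by positivity), mul_div_cancel₀ _ (ne_of_gt hn0)]
  have hint : Integrable (fun ω => rexp (ε * (-(fun ω => ∑ i ∈ Finset.range n, W a (i + 1) ω)) ω)) P := by
    simp only [Pi.neg_apply, mul_neg, ← neg_mul]
    exact integrable_exp_S hW hmap hind a n (-ε)
  have h := measure_ge_le_exp_mul_mgf (X := -(fun ω => ∑ i ∈ Finset.range n, W a (i + 1) ω))
    (μ := P) (t := ε) ((n : ℝ) * ε - (n : ℝ) * μ a) hε0 hint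
  rw [mgf_neg, mgf_S hW hmap hind a n (-ε)] at h
  have hexp : rexp (-ε * ((n : ℝ) * ε - (n : ℝ) * μ a)) * rexp ((n : ℝ) * (-ε * μ a + (-ε) ^ 2 / 2))
      = rexp (-l) := by
    rw [← Real.exp_add]
    congr 1
    linear_combination (-(1 : ℝ) / 2) * hε2
  rw [hexp] at h
  have hset : {ω | ∑ i ∈ Finset.range n, W a (i + 1) ω ≤ (n : ℝ) * μ a - (n : ℝ) * ε}
      = {ω | (n : ℝ) * ε - (n : ℝ) * μ a ≤ (-(fun ω => ∑ i ∈ Finset.range n, W a (i + 1) ω)) ω} := by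
    ext ω
    simp only [Set.mem_setOf_eq, Pi.neg_apply]
    constructor <;> intro h' <;> linarith
  rw [hset]
  exact (ENNReal.le_ofReal_iff_toReal_le (measure_ne_top P _) (Real.exp_nonneg _)).mpr h

end Chernoff



set_option maxHeartbeats 1000000 in

/-- **Confidence level of EOCP (Corollary 1).** -/
theorem eocp_confidence
    (A : ℕ) (hA : 2 ≤ A) (μ : Fin A → ℝ) (hμ : ∀ a, μ a ∈ Set.Icc (0 : ℝ) 1)
    (astar : Fin A) (hopt : ∀ a, a ≠ astar → μ a < μ astar)
    (Δlb : ℝ) (hΔlb : 0 < Δlb) (hΔlb' : ∀ a, a ≠ astar → Δlb ≤ μ astar - μ a) :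
    ∃ C : ℝ, 0 < C ∧
      ∀ (Ω : Type) [MeasurableSpace Ω] (P : Measure Ω) [IsProbabilityMeasure P]
        (W : Fin A → ℕ → Ω → ℝ),
        (∀ a i, Measurable (W a i)) →
        (∀ a i, Measure.map (W a i) P = gaussianReal (μ a) 1) →
        iIndepFun (fun p : Fin A × ℕ => W p.1 p.2) P →
        ∀ T : ℕ, (16 : ℝ) ≤ T → (A : ℝ) ≤ T →
          16 * (Real.log T + 4 * Real.sqrt (2 * Real.log T)) / Δlb ^ 2 ≤ T →
          P {ω | eocpCommit (by omega : 0 < A) W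
              (Real.log T + 4 * Real.sqrt (2 * Real.log T))
              (8 * A * (Real.log T + 4 * Real.sqrt (2 * Real.log T)) / Δlb ^ 2 + A)
              ω ≠ astar}
            ≤ ENNReal.ofReal (C / T) := by
  have hApos : 0 < A := by omega
  refine ⟨2 * A * (16 * A / Δlb ^ 2 + A), by positivity, ?_⟩
  intro Ω _ P _ W hW hmap hind T hT16 hTA hTl
  have hT0 : (0 : ℝ) < T := by linarith
  set x := Real.log (T : ℝ) with hxdef
  have hx : 0 < x := Real.log_pos (by linarith)
  set l := x + 4 * Real.sqrt (2 * x) with hldef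
  set Tc := 8 * (A : ℝ) * l / Δlb ^ 2 + A with hTcdef
  set y := 4 * Real.sqrt (2 * x) with hydef
  have hy0 : 0 ≤ y := by positivity
  have hy2 : y ^ 2 = 32 * x := by
    rw [hydef, mul_pow, Real.sq_sqrt (by positivity)]
    ring
  have hly : l = x + y := by rw [hldef, hydef]
  have hl : 0 < l := by rw [hly]; linarith
  set n := ⌊Tc⌋₊ with hndef
  have hTcA : (A : ℝ) ≤ Tc := by
    have h0 : 0 ≤ 8 * (A : ℝ) * l / Δlb ^ 2 := by positivity
    rw [hTcdef]; linarith
  have hTc0 : 0 ≤ Tc := le_trans (by positivity) hTcA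
  have hnTc : (n : ℝ) ≤ Tc := Nat.floor_le hTc0
  -- the bad events
  set Eup : Fin A → ℕ → Set Ω := fun a m =>
    {ω | (m : ℝ) * μ a + (m : ℝ) * Real.sqrt (2 * l / m) ≤ ∑ i ∈ Finset.range m, W a (i + 1) ω}
    with hEup
  set Elow : Fin A → ℕ → Set Ω := fun a m =>
    {ω | ∑ i ∈ Finset.range m, W a (i + 1) ω ≤ (m : ℝ) * μ a - (m : ℝ) * Real.sqrt (2 * l / m)}
    with hElow
  -- inclusion into the union of bad events
  have hsubset : {ω | eocpCommit hApos W l Tc ω ≠ astar} ⊆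
      ⋃ a : Fin A, ⋃ m ∈ Finset.Icc 1 n, (Eup a m ∪ Elow a m) := by
    intro ω hω
    by_contra hmem
    simp only [Set.mem_iUnion, not_exists, Set.mem_union, not_or, Set.mem_setOf_eq,
      hEup, hElow] at hmem
    refine hω (commit_good hApos hA μ astar hopt Δlb hΔlb hΔlb' l hl W ω Tc hTcdef ?_)
    intro a m hm1 hmn
    obtain ⟨h1, h2⟩ := hmem a m (Finset.mem_Icc.mpr ⟨hm1, hmn⟩)
    push_neg at h1 h2
    have hm0 : (0 : ℝ) < m := by exact_mod_cast hm1
    rw [empMean, abs_lt]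
    constructor
    · rw [lt_sub_iff_add_lt, lt_div_iff₀ hm0]
      nlinarith [h2]
    · rw [sub_lt_iff_lt_add, div_lt_iff₀ hm0]
      nlinarith [h1]
  -- real-valued tail estimate
  have hexpsq : rexp (y / 2) ^ 2 = rexp y := by
    rw [sq, ← Real.exp_add]
    congr 1
    ring
  have hexpy : 8 * x ≤ Real.exp y := by
    have h1 := Real.add_one_le_exp (y / 2)
    nlinarith [h1, hy2, hy0, Real.exp_pos (y / 2), hexpsq]
  have hyexp : y ≤ Real.exp y := by linarith [Real.add_one_le_exp y]
  have hlexp : l * Real.exp (-y) ≤ 2 := by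
    rw [Real.exp_neg]
    have hle : l ≤ 2 * Real.exp y := by rw [hly]; nlinarith [hexpy, hyexp]
    calc l * (Real.exp y)⁻¹ ≤ (2 * Real.exp y) * (Real.exp y)⁻¹ :=
          mul_le_mul_of_nonneg_right hle (by positivity)
    _ = 2 := by field_simp
  have hexpl : Real.exp (-l) = Real.exp (-y) / T := by
    rw [hly, neg_add, Real.exp_add, Real.exp_neg x, hxdef, Real.exp_log hT0]
    ring
  have heyle1 : Real.exp (-y) ≤ 1 := Real.exp_le_one_iff.mpr (by linarith)
  have hnexp : (n : ℝ) * Real.exp (-y) ≤ 16 * A / Δlb ^ 2 + A := by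
    have h1 : (n : ℝ) * Real.exp (-y) ≤ Tc * Real.exp (-y) :=
      mul_le_mul_of_nonneg_right hnTc (Real.exp_pos _).le
    have h2 : Tc * Real.exp (-y)
        = (8 * (A : ℝ) / Δlb ^ 2) * (l * Real.exp (-y)) + (A : ℝ) * Real.exp (-y) := by
      rw [hTcdef]; ring
    have h3 : (8 * (A : ℝ) / Δlb ^ 2) * (l * Real.exp (-y)) ≤ (8 * (A : ℝ) / Δlb ^ 2) * 2 :=
      mul_le_mul_of_nonneg_left hlexp (by positivity)
    have h4 : (A : ℝ) * Real.exp (-y) ≤ (A : ℝ) * 1 :=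
      mul_le_mul_of_nonneg_left heyle1 (by positivity)
    calc (n : ℝ) * Real.exp (-y) ≤ Tc * Real.exp (-y) := h1
    _ = (8 * (A : ℝ) / Δlb ^ 2) * (l * Real.exp (-y)) + (A : ℝ) * Real.exp (-y) := h2
    _ ≤ (8 * (A : ℝ) / Δlb ^ 2) * 2 + (A : ℝ) * 1 := add_le_add h3 h4
    _ = 16 * A / Δlb ^ 2 + A := by ring
  have hreal : (A : ℝ) * ((n : ℝ) * (2 * rexp (-l))) ≤ 2 * A * (16 * A / Δlb ^ 2 + A) / T := by
    rw [hexpl]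
    have hEq : (A : ℝ) * ((n : ℝ) * (2 * (Real.exp (-y) / T)))
        = 2 * A * ((n : ℝ) * Real.exp (-y)) / T := by ring
    rw [hEq, div_le_div_iff₀ hT0 hT0]
    have := mul_le_mul_of_nonneg_left hnexp (by positivity : (0:ℝ) ≤ 2 * A)
    nlinarith [this, hT0]
  -- put everything together
  calc P {ω | eocpCommit (by omega : 0 < A) W l Tc ω ≠ astar}
      ≤ P (⋃ a : Fin A, ⋃ m ∈ Finset.Icc 1 n, (Eup a m ∪ Elow a m)) := measure_mono hsubset
  _ ≤ ∑ a : Fin A, P (⋃ m ∈ Finset.Icc 1 n, (Eup a m ∪ Elow a m)) :=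
      measure_iUnion_fintype_le _ _
  _ ≤ ∑ a : Fin A, ∑ m ∈ Finset.Icc 1 n, P (Eup a m ∪ Elow a m) :=
      Finset.sum_le_sum fun a _ => measure_biUnion_finset_le _ _
  _ ≤ ∑ a : Fin A, ∑ m ∈ Finset.Icc 1 n, ENNReal.ofReal (2 * rexp (-l)) := by
      refine Finset.sum_le_sum fun a _ => Finset.sum_le_sum fun m hm => ?_
      have hm1 : 1 ≤ m := (Finset.mem_Icc.mp hm).1
      calc P (Eup a m ∪ Elow a m) ≤ P (Eup a m) + P (Elow a m) := measure_union_le _ _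
      _ ≤ ENNReal.ofReal (rexp (-l)) + ENNReal.ofReal (rexp (-l)) := by
          rw [hEup, hElow]
          exact add_le_add (chernoff_up hW hmap hind a m hm1 hl)
            (chernoff_low hW hmap hind a m hm1 hl)
      _ = ENNReal.ofReal (2 * rexp (-l)) := by
          rw [← ENNReal.ofReal_add (Real.exp_nonneg _) (Real.exp_nonneg _)]
          congr 1
          ring
  _ = (A : ℝ≥0∞) * ((n : ℝ≥0∞) * ENNReal.ofReal (2 * rexp (-l))) := by
      rw [Finset.sum_const, Finset.sum_const, Finset.card_univ, Fintype.card_fin,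
        Nat.card_Icc]
      simp only [nsmul_eq_mul]
      norm_num
  _ = ENNReal.ofReal ((A : ℝ) * ((n : ℝ) * (2 * rexp (-l)))) := by
      rw [← ENNReal.ofReal_natCast A, ← ENNReal.ofReal_natCast n,
        ← ENNReal.ofReal_mul (by positivity : (0:ℝ) ≤ (n : ℝ)),
        ← ENNReal.ofReal_mul (by positivity : (0:ℝ) ≤ (A : ℝ))]
  _ ≤ ENNReal.ofReal (2 * A * (16 * A / Δlb ^ 2 + A) / T) := ENNReal.ofReal_le_ofReal hreal


end
end

section
/- Sum bound via the unimodal-comparison argument (used in the proof of Lemma 3(c)): For all reals δ > 0 and γ > 0, Σ_{s = ⌈γ⌉}^∞ exp( −(δ²/2)·(√s − √γ)² ) ≤ 1 + 2/δ² + √(2πγ)/δ, where the sum is over integers s ≥ ⌈γ⌉. -/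
open MeasureTheory Real

/-- **Sum bound via the unimodal-comparison argument (used in the proof of Lemma 3(c)).** -/
theorem sum_gaussian_tail_bound (δ γ : ℝ) (hδ : 0 < δ) (hγ : 0 < γ) :
    ∑' n : ℕ, Real.exp (-(δ ^ 2 / 2) * (Real.sqrt ((⌈γ⌉₊ : ℝ) + n) - Real.sqrt γ) ^ 2)
      ≤ 1 + 2 / δ ^ 2 + Real.sqrt (2 * Real.pi * γ) / δ := by
  have hc0' : 0 < δ ^ 2 / 2 := by positivity
  set c : ℝ := δ ^ 2 / 2 with hc
  have hc0 : 0 < c := hc0'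
  set f : ℝ → ℝ := fun s => Real.exp (-c * (Real.sqrt s - Real.sqrt γ) ^ 2) with hfdef
  set m : ℝ := (⌈γ⌉₊ : ℝ) with hm
  have hγm : γ ≤ m := Nat.le_ceil γ
  have hγ0 : (0 : ℝ) ≤ γ := hγ.le
  clear_value c m
  have hfcont : Continuous f := by
    apply Real.continuous_exp.comp
    continuity
  have hfnonneg : ∀ s, 0 ≤ f s := fun s => Real.exp_nonneg _
  clear_value f
  -- antitone on [γ, ∞)
  have hanti : AntitoneOn f (Set.Ici γ) := by
    intro s hs t ht hst
    rw [hfdef]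
    apply Real.exp_le_exp.2
    have h1 : Real.sqrt γ ≤ Real.sqrt s := Real.sqrt_le_sqrt hs
    have h2 : Real.sqrt s ≤ Real.sqrt t := Real.sqrt_le_sqrt hst
    have h3 : (Real.sqrt s - Real.sqrt γ) ^ 2 ≤ (Real.sqrt t - Real.sqrt γ) ^ 2 := by nlinarith
    nlinarith
  -- the integral bound
  have hint : ∀ B : ℝ, γ ≤ B →
      ∫ s in γ..B, f s ≤ 2 / δ ^ 2 + Real.sqrt (2 * Real.pi * γ) / δ := by
    intro B hB
    set b : ℝ := Real.sqrt B - Real.sqrt γ with hb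
    have hb0 : 0 ≤ b := sub_nonneg.2 (Real.sqrt_le_sqrt hB)
    clear_value b
    have hcv := intervalIntegral.integral_comp_smul_deriv (a := (0:ℝ)) (b := b)
      (f := fun u => (u + Real.sqrt γ) ^ 2) (f' := fun u => 2 * (u + Real.sqrt γ)) (g := f)
      (fun x _ => by
        have h := ((hasDerivAt_id x).add_const (Real.sqrt γ)).pow 2
        convert h using 1
        exacts [rfl, rfl, rfl, by simp])
      ((by continuity : Continuous fun u : ℝ => 2 * (u + Real.sqrt γ)).continuousOn) hfcont
    have e0 : ((0:ℝ) + Real.sqrt γ) ^ 2 = γ := by rw [zero_add, Real.sq_sqrt hγ0]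
    have eb : (b + Real.sqrt γ) ^ 2 = B := by
      rw [hb, sub_add_cancel, Real.sq_sqrt (hγ0.trans hB)]
    simp only [e0, eb] at hcv
    have hcov2 : ∫ s in γ..B, f s
        = ∫ u in (0:ℝ)..b, 2 * (u + Real.sqrt γ) * Real.exp (-c * u ^ 2) := by
      rw [← hcv]
      apply intervalIntegral.integral_congr
      intro u hu
      rw [Set.uIcc_of_le hb0] at hu
      have hu0 : 0 ≤ u := hu.1
      have hsq : Real.sqrt ((u + Real.sqrt γ) ^ 2) = u + Real.sqrt γ :=
        Real.sqrt_sq (by positivity)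
      simp only [Function.comp, smul_eq_mul, hfdef, hsq]
      ring_nf
    rw [hcov2]
    have hsplit : ∫ u in (0:ℝ)..b, 2 * (u + Real.sqrt γ) * Real.exp (-c * u ^ 2)
        = (∫ u in (0:ℝ)..b, 2 * u * Real.exp (-c * u ^ 2))
          + (2 * Real.sqrt γ) * ∫ u in (0:ℝ)..b, Real.exp (-c * u ^ 2) := by
      rw [← intervalIntegral.integral_const_mul, ← intervalIntegral.integral_add
        (Continuous.intervalIntegrable (by fun_prop) _ _)
        (Continuous.intervalIntegrable (by fun_prop) _ _)]
      apply intervalIntegral.integral_congr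
      intro u _
      ring
    rw [hsplit]
    have h1 : (∫ u in (0:ℝ)..b, 2 * u * Real.exp (-c * u ^ 2)) ≤ 2 / δ ^ 2 := by
      have hderiv : ∀ x ∈ Set.uIcc (0:ℝ) b,
          HasDerivAt (fun x : ℝ => -(1/c) * Real.exp (-c * x ^ 2))
            (2 * x * Real.exp (-c * x ^ 2)) x := by
        intro x _
        have h := ((hasDerivAt_pow 2 x).const_mul (-c)).exp.const_mul (-(1/c))
        convert h using 1
        · rfl
        · rfl
        field_simp [hc0.ne']
        ring
      have hcont2 : Continuous fun x : ℝ => 2 * x * Real.exp (-c * x ^ 2) := by fun_prop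
      have hftc := intervalIntegral.integral_eq_sub_of_hasDerivAt hderiv
        (hcont2.intervalIntegrable _ _)
      rw [hftc]
      have hcc : 1 / c = 2 / δ ^ 2 := by rw [hc]; field_simp
      rw [← hcc]
      show -(1/c) * Real.exp (-c * b ^ 2) - -(1/c) * Real.exp (-c * 0 ^ 2) ≤ 1/c
      have he0 : Real.exp (-c * (0:ℝ) ^ 2) = 1 := by norm_num
      rw [he0]
      nlinarith [Real.exp_nonneg (-c * b ^ 2), one_div_pos.2 hc0]
    have h2 : (∫ u in (0:ℝ)..b, Real.exp (-c * u ^ 2)) ≤ Real.sqrt (Real.pi / c) / 2 := by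
      rw [intervalIntegral.integral_of_le hb0]
      calc ∫ u in Set.Ioc 0 b, Real.exp (-c * u ^ 2)
          ≤ ∫ u in Set.Ioi 0, Real.exp (-c * u ^ 2) := by
            apply setIntegral_mono_set (integrable_exp_neg_mul_sq hc0).integrableOn
            · filter_upwards with x using Real.exp_nonneg _
            · exact Set.Ioc_subset_Ioi_self.eventuallyLE
        _ = Real.sqrt (Real.pi / c) / 2 := integral_gaussian_Ioi c
    have hval : 2 * Real.sqrt γ * (Real.sqrt (Real.pi / c) / 2)
        = Real.sqrt (2 * Real.pi * γ) / δ := by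
      rw [hc, show Real.pi / (δ ^ 2 / 2) = 2 * Real.pi / δ ^ 2 by ring,
        Real.sqrt_div (by positivity) (δ ^ 2), Real.sqrt_sq hδ.le,
        Real.sqrt_mul (by positivity) γ]
      ring
    have h2' := mul_le_mul_of_nonneg_left h2 (by positivity : (0:ℝ) ≤ 2 * Real.sqrt γ)
    linarith
  -- each partial sum is bounded
  have key : ∀ N : ℕ, ∑ i ∈ Finset.range N, f (m + i)
      ≤ 1 + 2 / δ ^ 2 + Real.sqrt (2 * Real.pi * γ) / δ := by
    intro N
    rcases N with _ | n
    · simp only [Finset.range_zero, Finset.sum_empty]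
      positivity
    · rw [Finset.sum_range_succ']
      have hterm : f (m + ((0:ℕ):ℝ)) ≤ 1 := by
        rw [hfdef]
        apply Real.exp_le_one_iff.2
        have h := sq_nonneg (Real.sqrt (m + ((0:ℕ):ℝ)) - Real.sqrt γ)
        nlinarith
      have hmn : γ ≤ m + (n:ℝ) := by
        have : (0:ℝ) ≤ (n:ℝ) := Nat.cast_nonneg n
        linarith
      have hsum : ∑ i ∈ Finset.range n, f (m + ((i + 1 : ℕ) : ℝ))
          ≤ ∫ s in m..(m + n), f s := by
        apply AntitoneOn.sum_le_integral
        apply hanti.mono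
        intro x hx
        exact le_trans hγm hx.1
      have hmono : ∫ s in m..(m + n), f s ≤ ∫ s in γ..(m + n), f s := by
        apply intervalIntegral.integral_mono_interval hγm
          (by linarith [Nat.cast_nonneg (α := ℝ) n]) le_rfl
        · filter_upwards with x using hfnonneg x
        · exact hfcont.intervalIntegrable _ _
      have hI := hint (m + n) hmn
      have hfin : ∑ i ∈ Finset.range n, f (m + ((i:ℕ) + 1 : ℕ))
          ≤ 2 / δ ^ 2 + Real.sqrt (2 * Real.pi * γ) / δ :=
        le_trans hsum (le_trans hmono hI)
      calc ∑ i ∈ Finset.range n, f (m + ↑(i + 1)) + f (m + ((0:ℕ):ℝ))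
          ≤ (2 / δ ^ 2 + Real.sqrt (2 * Real.pi * γ) / δ) + 1 := add_le_add hfin hterm
        _ = 1 + 2 / δ ^ 2 + Real.sqrt (2 * Real.pi * γ) / δ := by ring
  have := Real.tsum_le_of_sum_range_le
    (f := fun n : ℕ => f (m + n)) (fun n => hfnonneg _) key
  simpa only [hfdef] using this
end
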